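/- arXiv:1203.6593 — 10 statements merged into one kernel-verified Lean document; each statement's English description precedes it below -/
import Mathlib

section
/- Let G be a Hausdorff topological group, U a symmetric open neighborhood of the identity, and 𝓤 a uniformity on G inducing the topology of G such that the multiplication map (x,y) ↦ x·y : U²×U² → G is uniformly continuous with respect to 𝓤. Then the uniform structures induced on the subset U by 𝓤, by the left uniformity 𝓤_l, and by the right uniformity 𝓤_r all coincide; equivalently, the filters 𝓤 ⊓ 𝓟(U ×ˢ U), 𝓤_l ⊓ 𝓟(U ×ˢ U) and 𝓤_r ⊓ 𝓟(U ×ˢ U) on G × G are equal. -/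
open Filter Set Topology Pointwise

/-- The left uniformity filter of a topological group. -/
def leftUF (G : Type*) [Group G] [TopologicalSpace G] : Filter (G × G) :=
  Filter.comap (fun p : G × G => p.1⁻¹ * p.2) (nhds 1)

/-- The right uniformity filter of a topological group. -/
def rightUF (G : Type*) [Group G] [TopologicalSpace G] : Filter (G × G) :=
  Filter.comap (fun p : G × G => p.1 * p.2⁻¹) (nhds 1)

/-- The product of a uniformity-like filter on `G × G` with itself, as a filter on
`(G × G) × (G × G)`; this agrees with the product uniformity when the filter is a uniformity. -/
def prodUF {G : Type*} (F : Filter (G × G)) : Filter ((G × G) × (G × G)) :=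
  Filter.comap (fun q : (G × G) × (G × G) => (q.1.1, q.2.1)) F ⊓
    Filter.comap (fun q : (G × G) × (G × G) => (q.1.2, q.2.2)) F

/-- Multiplication is uniformly continuous on the set `s ⊆ G × G` with respect to the
uniformity-like filter `F` on `G × G`. -/
def MulUCOn {G : Type*} [Mul G] (F : Filter (G × G)) (s : Set (G × G)) : Prop :=
  Filter.Tendsto (fun q : (G × G) × (G × G) => (q.1.1 * q.1.2, q.2.1 * q.2.2))
    (prodUF F ⊓ 𝓟 (s ×ˢ s)) F


/-!
Since `𝓤` induces the topology, `z` is near `1` exactly when `(1, z)` is `𝓤`-close, so `𝓤_l` is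
the pullback of `𝓤` along `(x, y) ↦ (1, x⁻¹ * y)`. For `x, y ∈ U`, uniform continuity of
multiplication on `U²` turns `𝓤`-closeness of `(x, y)` into that of `(x⁻¹x, x⁻¹y) = (1, x⁻¹y)`
(multiply by the diagonal pair `(x⁻¹, x⁻¹)`), and back (multiply `(1, x⁻¹y)` by `(x, x)`).
The right uniformity is the mirror image, with `(x * y⁻¹, 1)`.
-/

open Uniformity

theorem MulUCOn.tendsto_mul {α G : Type*} [Mul G] {F : Filter (G × G)} {s : Set (G × G)}
    (h : MulUCOn F s) {l : Filter α} {f g : α → G × G}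
    (hf : Tendsto f l F) (hg : Tendsto g l F)
    (hs : ∀ᶠ a in l, ((f a).1, (g a).1) ∈ s ∧ ((f a).2, (g a).2) ∈ s) :
    Tendsto (fun a => ((f a).1 * (g a).1, (f a).2 * (g a).2)) l F :=
  h.comp (f := fun a => (((f a).1, (g a).1), ((f a).2, (g a).2))) <| tendsto_inf.2
    ⟨tendsto_inf.2 ⟨tendsto_comap_iff.2 hf, tendsto_comap_iff.2 hg⟩, tendsto_principal.2 hs⟩

section UniformGroup

variable {G : Type*} [Group G] [UniformSpace G]

theorem leftUF_eq_comap_uniformity :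
    leftUF G = comap (fun p : G × G => (1, p.1⁻¹ * p.2)) (𝓤 G) := by
  rw [leftUF, nhds_eq_comap_uniformity, comap_comap]
  rfl

theorem rightUF_eq_comap_uniformity :
    rightUF G = comap (fun p : G × G => (p.1 * p.2⁻¹, 1)) (𝓤 G) := by
  rw [rightUF, nhds_eq_comap_uniformity', comap_comap]
  rfl

theorem uniformity_inf_principal_le_leftUF {U S : Set G} (hmul : MulUCOn (𝓤 G) (S ×ˢ S))
    (hUS : U ⊆ S) (hUS' : U⁻¹ ⊆ S) : 𝓤 G ⊓ 𝓟 (U ×ˢ U) ≤ leftUF G := by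
  rw [leftUF_eq_comap_uniformity, ← tendsto_iff_comap]
  refine (hmul.tendsto_mul (tendsto_diag_uniformity (fun p : G × G => p.1⁻¹) _) inf_le_left
    ?_).congr fun p => by simp only [inv_mul_cancel]
  filter_upwards [mem_inf_of_right (mem_principal_self _)] with p ⟨hx, hy⟩
  exact ⟨⟨hUS' (inv_mem_inv.2 hx), hUS hx⟩, hUS' (inv_mem_inv.2 hx), hUS hy⟩

theorem uniformity_inf_principal_le_rightUF {U S : Set G} (hmul : MulUCOn (𝓤 G) (S ×ˢ S))
    (hUS : U ⊆ S) (hUS' : U⁻¹ ⊆ S) : 𝓤 G ⊓ 𝓟 (U ×ˢ U) ≤ rightUF G := by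
  rw [rightUF_eq_comap_uniformity, ← tendsto_iff_comap]
  refine (hmul.tendsto_mul inf_le_left (tendsto_diag_uniformity (fun p : G × G => p.2⁻¹) _)
    ?_).congr fun p => by simp only [mul_inv_cancel]
  filter_upwards [mem_inf_of_right (mem_principal_self _)] with p ⟨hx, hy⟩
  exact ⟨⟨hUS hx, hUS' (inv_mem_inv.2 hy)⟩, hUS hy, hUS' (inv_mem_inv.2 hy)⟩

theorem leftUF_inf_principal_le_uniformity {U S : Set G} (hmul : MulUCOn (𝓤 G) (S ×ˢ S))
    (hU : U ∈ 𝓝 1) (hUS : U ⊆ S) (h1 : 1 ∈ S) : leftUF G ⊓ 𝓟 (U ×ˢ U) ≤ 𝓤 G := by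
  have hnear : ∀ᶠ p : G × G in leftUF G, p.1⁻¹ * p.2 ∈ U := preimage_mem_comap hU
  rw [leftUF_eq_comap_uniformity] at hnear ⊢
  refine (hmul.tendsto_mul (tendsto_diag_uniformity (fun p : G × G => p.1) _)
    (tendsto_comap.mono_left inf_le_left) ?_).congr fun p => by
      simp only [mul_one, mul_inv_cancel_left]
  filter_upwards [mem_inf_of_left hnear, mem_inf_of_right (mem_principal_self _)] with p hxy ⟨hx, _⟩
  exact ⟨⟨hUS hx, h1⟩, hUS hx, hUS hxy⟩

theorem rightUF_inf_principal_le_uniformity {U S : Set G} (hmul : MulUCOn (𝓤 G) (S ×ˢ S))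
    (hU : U ∈ 𝓝 1) (hUS : U ⊆ S) (h1 : 1 ∈ S) : rightUF G ⊓ 𝓟 (U ×ˢ U) ≤ 𝓤 G := by
  have hnear : ∀ᶠ p : G × G in rightUF G, p.1 * p.2⁻¹ ∈ U := preimage_mem_comap hU
  rw [rightUF_eq_comap_uniformity] at hnear ⊢
  refine (hmul.tendsto_mul (tendsto_comap.mono_left inf_le_left)
    (tendsto_diag_uniformity (fun p : G × G => p.2) _) ?_).congr fun p => by
      simp only [one_mul, inv_mul_cancel_right]
  filter_upwards [mem_inf_of_left hnear, mem_inf_of_right (mem_principal_self _)] with p hxy ⟨_, hy⟩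
  exact ⟨⟨hUS hxy, hUS hy⟩, h1, hUS hy⟩

end UniformGroup

theorem stmt_0_general {G : Type*} [Group G] [TopologicalSpace G]
    (U : Set G) (hUo : IsOpen U) (hU1 : (1 : G) ∈ U) (hUs : U⁻¹ = U)
    (u : UniformSpace G) (hu : u.toTopologicalSpace = ‹TopologicalSpace G›)
    (hmul : MulUCOn (@uniformity G u) ((U ^ 2) ×ˢ (U ^ 2))) :
    @uniformity G u ⊓ 𝓟 (U ×ˢ U) = leftUF G ⊓ 𝓟 (U ×ˢ U) ∧
      @uniformity G u ⊓ 𝓟 (U ×ˢ U) = rightUF G ⊓ 𝓟 (U ×ˢ U) := by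
  subst hu
  have hU : U ∈ 𝓝 (1 : G) := hUo.mem_nhds hU1
  have hUS : U ⊆ U ^ 2 := pow_two U ▸ subset_mul_left U hU1
  have hUS' : U⁻¹ ⊆ U ^ 2 := hUs.symm ▸ hUS
  have h1 : (1 : G) ∈ U ^ 2 := hUS hU1
  exact ⟨inf_congr_right (leftUF_inf_principal_le_uniformity hmul hU hUS h1)
      (uniformity_inf_principal_le_leftUF hmul hUS hUS'),
    inf_congr_right (rightUF_inf_principal_le_uniformity hmul hU hUS h1)
      (uniformity_inf_principal_le_rightUF hmul hUS hUS')⟩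

theorem stmt_0 {G : Type*} [Group G] [TopologicalSpace G] [IsTopologicalGroup G] [T2Space G]
    (U : Set G) (hUo : IsOpen U) (hU1 : (1 : G) ∈ U) (hUs : U⁻¹ = U)
    (u : UniformSpace G) (hu : u.toTopologicalSpace = ‹TopologicalSpace G›)
    (hmul : MulUCOn (@uniformity G u) ((U ^ 2) ×ˢ (U ^ 2))) :
    @uniformity G u ⊓ 𝓟 (U ×ˢ U) = leftUF G ⊓ 𝓟 (U ×ˢ U) ∧
      @uniformity G u ⊓ 𝓟 (U ×ˢ U) = rightUF G ⊓ 𝓟 (U ×ˢ U) :=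
  stmt_0_general U hUo hU1 hUs u hu hmul
end

section
/- Let G be a Hausdorff locally compact topological group and U a symmetric open neighborhood of the identity whose closure is compact. Then G is U-locally uniform; in fact the multiplication map (x,y) ↦ x·y : U²×U² → G is uniformly continuous with respect to the left uniformity 𝓤_l. -/
open Filter Set Topology Pointwise

/-!
Writing `(ab)⁻¹(cd) = b⁻¹(a⁻¹c)b · b⁻¹d`, the product of two pairs that are left-close is
left-close as soon as conjugation by the second factor `b` is uniformly continuous at `1`.
This holds for `b` in a compact set, and `U² ⊆ closure U * closure U` is compact.
-/

theorem IsCompact.tendsto_conj_nhds_one_prod_principal {G : Type*} [Group G]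
    [TopologicalSpace G] [IsTopologicalGroup G] {K : Set G} (hK : IsCompact K) :
    Tendsto (fun p : G × G => p.2⁻¹ * p.1 * p.2) (𝓝 1 ×ˢ 𝓟 K) (𝓝 1) := by
  intro W hW
  have hconj : ∀ g : G, ContinuousAt (fun z : G × G => z.2⁻¹ * z.1 * z.2) (1, g) := by
    fun_prop
  have hconjW : ∀ᶠ v in 𝓝 (1 : G), ∀ g ∈ K, g⁻¹ * v * g ∈ W :=
    hK.eventually_forall_of_forall_eventually fun g _ =>
      (hconj g).preimage_mem_nhds (by simpa only [mul_one, inv_mul_cancel] using hW)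
  exact mem_map.2 (mem_prod_principal.2 hconjW)

theorem mulUCOn_leftUF_of_subset_snd_preimage {G : Type*} [Group G] [TopologicalSpace G]
    [IsTopologicalGroup G] {K : Set G} (hK : IsCompact K) {s : Set (G × G)}
    (hs : s ⊆ Prod.snd ⁻¹' K) : MulUCOn (leftUF G) s := by
  set F := prodUF (leftUF G) ⊓ 𝓟 (s ×ˢ s)
  have hfst : Tendsto (fun q : (G × G) × (G × G) => q.1.1⁻¹ * q.2.1) F (𝓝 1) :=
    (tendsto_comap.comp tendsto_comap).mono_left (inf_le_left.trans inf_le_left)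
  have hsnd : Tendsto (fun q : (G × G) × (G × G) => q.1.2⁻¹ * q.2.2) F (𝓝 1) :=
    (tendsto_comap.comp tendsto_comap).mono_left (inf_le_left.trans inf_le_right)
  have hsnd_mem : Tendsto (fun q : (G × G) × (G × G) => q.1.2) F (𝓟 K) :=
    tendsto_principal.2 <| mem_inf_of_right <| mem_principal.2 fun q hq => hs hq.1
  have hconj := hK.tendsto_conj_nhds_one_prod_principal.comp (hfst.prodMk hsnd_mem)
  rw [MulUCOn, leftUF, tendsto_comap_iff]
  refine ((hconj.mul hsnd).congr fun q => ?_).mono_right (by rw [one_mul])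
  simp only [Function.comp_apply]
  group

theorem stmt_4_general {G : Type*} [Group G] [TopologicalSpace G] [IsTopologicalGroup G]
    (U : Set G)
    (hUc : IsCompact (closure U)) :
    (∃ u : UniformSpace G, u.toTopologicalSpace = ‹TopologicalSpace G› ∧
        MulUCOn (@uniformity G u) ((U ^ 2) ×ˢ (U ^ 2))) ∧
      MulUCOn (leftUF G) ((U ^ 2) ×ˢ (U ^ 2)) := by
  have hsq : U ^ 2 ⊆ closure U * closure U := by
    rw [pow_two]
    exact mul_subset_mul subset_closure subset_closure
  have hleft : MulUCOn (leftUF G) ((U ^ 2) ×ˢ (U ^ 2)) :=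
    mulUCOn_leftUF_of_subset_snd_preimage (hUc.mul hUc) fun p hp => hsq hp.2
  exact ⟨⟨IsTopologicalGroup.leftUniformSpace G, rfl, hleft⟩, hleft⟩

theorem stmt_4 {G : Type*} [Group G] [TopologicalSpace G] [IsTopologicalGroup G] [T2Space G]
    [LocallyCompactSpace G]
    (U : Set G) (hUo : IsOpen U) (hU1 : (1 : G) ∈ U) (hUs : U⁻¹ = U)
    (hUc : IsCompact (closure U)) :
    (∃ u : UniformSpace G, u.toTopologicalSpace = ‹TopologicalSpace G› ∧
        MulUCOn (@uniformity G u) ((U ^ 2) ×ˢ (U ^ 2))) ∧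
      MulUCOn (leftUF G) ((U ^ 2) ×ˢ (U ^ 2)) :=
  stmt_4_general U hUc
end

section
/- Let U be a symmetric open neighborhood of the identity of a Hausdorff topological group G such that x·y = y·x for all x, y ∈ U. Then G is U-locally uniform: the multiplication map (x,y) ↦ x·y : U²×U² → G is uniformly continuous with respect to the left uniformity 𝓤_l. -/
open Filter Set Topology Pointwise

/-
If `x⁻¹x'` commutes with `y`, then `(xy)⁻¹(x'y') = (x⁻¹x')(y⁻¹y')`, so the left-uniform
displacement of a product is the product of the displacements. Taking `x⁻¹x'` in a small
neighbourhood of `1` inside `U`, it commutes with `U`, hence with every `y ∈ U²`, and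
continuity of multiplication at `(1, 1)` finishes the argument.
-/

theorem mul_inv_mul_mul_eq_of_commute {G : Type*} [Group G] {x x' y y' : G}
    (h : Commute (x⁻¹ * x') y) : (x * y)⁻¹ * (x' * y') = (x⁻¹ * x') * (y⁻¹ * y') := by
  have h' : y⁻¹ * (x⁻¹ * x') = (x⁻¹ * x') * y⁻¹ := h.inv_right.symm.eq
  calc (x * y)⁻¹ * (x' * y') = y⁻¹ * (x⁻¹ * x') * y' := by group
    _ = (x⁻¹ * x') * (y⁻¹ * y') := by rw [h', mul_assoc]

theorem commute_of_mem_sq {G : Type*} [Monoid G] {U : Set G} {a y : G}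
    (ha : ∀ u ∈ U, Commute a u) (hy : y ∈ U ^ 2) : Commute a y := by
  rw [pow_two] at hy
  obtain ⟨u, hu, v, hv, rfl⟩ := hy
  exact (ha u hu).mul_right (ha v hv)

theorem mulUCOn_leftUF_of_forall {G : Type*} [Group G] [TopologicalSpace G] {s : Set (G × G)}
    (h : ∀ W ∈ 𝓝 (1 : G), ∃ V ∈ 𝓝 (1 : G), ∀ p ∈ s, ∀ q ∈ s,
      p.1⁻¹ * q.1 ∈ V → p.2⁻¹ * q.2 ∈ V → (p.1 * p.2)⁻¹ * (q.1 * q.2) ∈ W) :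
    MulUCOn (leftUF G) s := by
  unfold MulUCOn leftUF prodUF
  rw [tendsto_comap_iff, tendsto_def]
  intro W hW
  obtain ⟨V, hV, hVW⟩ := h W hW
  have h₁ := preimage_mem_comap (m := fun q : (G × G) × (G × G) => (q.1.1, q.2.1))
    (preimage_mem_comap (m := fun p : G × G => p.1⁻¹ * p.2) hV)
  have h₂ := preimage_mem_comap (m := fun q : (G × G) × (G × G) => (q.1.2, q.2.2))
    (preimage_mem_comap (m := fun p : G × G => p.1⁻¹ * p.2) hV)
  filter_upwards [mem_inf_of_left (inter_mem_inf h₁ h₂), mem_inf_of_right (mem_principal_self _)]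
    with q ⟨hq₁, hq₂⟩ ⟨hp, hp'⟩
  exact hVW q.1 hp q.2 hp' hq₁ hq₂

theorem stmt_5_general {G : Type*} [Group G] [TopologicalSpace G] [IsTopologicalGroup G]
    (U : Set G) (hUo : IsOpen U) (hU1 : (1 : G) ∈ U)
    (hcomm : ∀ x ∈ U, ∀ y ∈ U, x * y = y * x) :
    MulUCOn (leftUF G) ((U ^ 2) ×ˢ (U ^ 2)) := by
  refine mulUCOn_leftUF_of_forall fun W hW => ?_
  obtain ⟨V, hVo, hV1, hVW⟩ := exists_open_nhds_one_mul_subset hW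
  refine ⟨V ∩ U, inter_mem (hVo.mem_nhds hV1) (hUo.mem_nhds hU1), ?_⟩
  rintro ⟨x, y⟩ ⟨-, hy⟩ ⟨x', y'⟩ - ⟨hxV, hxU⟩ ⟨hyV, -⟩
  have hcomm_y : Commute (x⁻¹ * x') y := commute_of_mem_sq (hcomm _ hxU) hy
  rw [mul_inv_mul_mul_eq_of_commute hcomm_y]
  exact hVW (mul_mem_mul hxV hyV)

theorem stmt_5 {G : Type*} [Group G] [TopologicalSpace G] [IsTopologicalGroup G] [T2Space G]
    (U : Set G) (hUo : IsOpen U) (hU1 : (1 : G) ∈ U) (hUs : U⁻¹ = U)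
    (hcomm : ∀ x ∈ U, ∀ y ∈ U, x * y = y * x) :
    MulUCOn (leftUF G) ((U ^ 2) ×ˢ (U ^ 2)) :=
  stmt_5_general U hUo hU1 hcomm
end

section
/- Let G and H be Hausdorff topological groups, f : G → H a continuous open group homomorphism, and U a symmetric open neighborhood of the identity of G such that G is U-locally uniform. Then H is f(U)-locally uniform (note that f(U) is a symmetric open neighborhood of the identity of H). In particular, if G is locally uniform then H is locally uniform. -/
/-!
Uniform continuity of multiplication on `U² × U²` forces conjugation by the elements of `U` to be
equicontinuous at `1`: multiply the close pairs `(a, a)`, `(1, v)` to get `(a, a v)` close, then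
multiply by `(a⁻¹, a⁻¹)`. This property is transported to `f(U)` by the continuous open
homomorphism `f`, passes to `f(U)²`, and on any set `S` with it multiplication is uniformly
continuous for the right uniformity, because
`(x₂ y₂)(x₁ y₁)⁻¹ = x₂ (y₂ y₁⁻¹) x₂⁻¹ · x₂ x₁⁻¹`.
-/

open Filter Set Topology Pointwise

open Uniformity

lemma mulUCOn_iff {G : Type*} [Mul G] {F : Filter (G × G)} {s : Set (G × G)} :
    MulUCOn F s ↔ ∀ D ∈ F, ∃ E ∈ F, ∀ x₁ x₂ y₁ y₂ : G, (x₁, x₂) ∈ E → (y₁, y₂) ∈ E →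
      (x₁, y₁) ∈ s → (x₂, y₂) ∈ s → (x₁ * y₁, x₂ * y₂) ∈ D := by
  rw [MulUCOn, prodUF, (((F.basis_sets.comap _).inf (F.basis_sets.comap _)).inf_principal
    (s ×ˢ s)).tendsto_left_iff]
  refine forall₂_congr fun D _ => ⟨?_, ?_⟩
  · rintro ⟨⟨E₁, E₂⟩, ⟨hE₁, hE₂⟩, hE⟩
    exact ⟨E₁ ∩ E₂, inter_mem hE₁ hE₂, fun x₁ x₂ y₁ y₂ hx hy h₁ h₂ =>
      hE (x := ((x₁, y₁), (x₂, y₂))) ⟨⟨hx.1, hy.2⟩, h₁, h₂⟩⟩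
  · rintro ⟨E, hE, h⟩
    exact ⟨(E, E), ⟨hE, hE⟩, fun ⟨⟨x₁, y₁⟩, ⟨x₂, y₂⟩⟩ ⟨⟨hx, hy⟩, h₁, h₂⟩ => h _ _ _ _ hx hy h₁ h₂⟩

section ConjEquicontinuous

variable {G H : Type*} [Group G] [Group H]

def ConjEquicontinuousAtOne [TopologicalSpace G] (S : Set G) : Prop :=
  ∀ W ∈ 𝓝 (1 : G), ∃ V ∈ 𝓝 (1 : G), ∀ a ∈ S, ∀ v ∈ V, a * v * a⁻¹ ∈ W

lemma conjEquicontinuousAtOne_of_mulUCOn [UniformSpace G] {U : Set G} (hU : U ∈ 𝓝 (1 : G))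
    (hUs : U⁻¹ = U) (h : MulUCOn (𝓤 G) ((U ^ 2) ×ˢ (U ^ 2))) : ConjEquicontinuousAtOne U := by
  have hU1 : (1 : G) ∈ U := mem_of_mem_nhds hU
  have hUU2 : U ⊆ U ^ 2 := pow_two U ▸ subset_mul_left U hU1
  intro W hW
  obtain ⟨D, hD, hDW⟩ := UniformSpace.mem_nhds_iff.mp hW
  obtain ⟨E, hE, hED⟩ := mulUCOn_iff.mp h D hD
  obtain ⟨E', hE', hE'E⟩ := mulUCOn_iff.mp h E hE
  refine ⟨UniformSpace.ball 1 E' ∩ U, inter_mem (UniformSpace.ball_mem_nhds 1 hE') hU, ?_⟩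
  rintro a ha v ⟨hv, hvU⟩
  have ha_inv : a⁻¹ ∈ U := by rwa [← hUs, Set.inv_mem_inv]
  have hav : a * v ∈ U ^ 2 := pow_two U ▸ mul_mem_mul ha hvU
  have h_left : (a * 1, a * v) ∈ E :=
    hE'E a a 1 v (refl_mem_uniformity hE') hv ⟨hUU2 ha, hUU2 hU1⟩ ⟨hUU2 ha, hUU2 hvU⟩
  rw [mul_one] at h_left
  have h_conj : (a * a⁻¹, a * v * a⁻¹) ∈ D :=
    hED a (a * v) a⁻¹ a⁻¹ h_left (refl_mem_uniformity hE) ⟨hUU2 ha, hUU2 ha_inv⟩ ⟨hav, hUU2 ha_inv⟩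
  rw [mul_inv_cancel] at h_conj
  exact hDW h_conj

lemma ConjEquicontinuousAtOne.image [TopologicalSpace G] [TopologicalSpace H] {f : G →* H}
    (hfc : Continuous f) (hfo : IsOpenMap f) {S : Set G} (hS : ConjEquicontinuousAtOne S) :
    ConjEquicontinuousAtOne (f '' S) := by
  intro W hW
  obtain ⟨V, hV, hVW⟩ := hS _ (hfc.tendsto' 1 1 (map_one f) hW)
  refine ⟨f '' V, by simpa only [map_one] using hfo.image_mem_nhds hV, ?_⟩
  rintro _ ⟨a, ha, rfl⟩ _ ⟨v, hv, rfl⟩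
  simpa only [mem_preimage, map_mul, map_inv] using hVW a ha v hv

lemma ConjEquicontinuousAtOne.mul [TopologicalSpace G] {S T : Set G}
    (hS : ConjEquicontinuousAtOne S) (hT : ConjEquicontinuousAtOne T) :
    ConjEquicontinuousAtOne (S * T) := by
  intro W hW
  obtain ⟨V₁, hV₁, hV₁W⟩ := hS W hW
  obtain ⟨V, hV, hVV₁⟩ := hT V₁ hV₁
  refine ⟨V, hV, ?_⟩
  rintro _ ⟨b, hb, c, hc, rfl⟩ v hv
  have h_conj : b * c * v * (b * c)⁻¹ = b * (c * v * c⁻¹) * b⁻¹ := by group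
  rw [h_conj]
  exact hV₁W b hb _ (hVV₁ c hc v hv)

lemma mulUCOn_rightUniformity_of_conjEquicontinuousAtOne [TopologicalSpace G]
    [IsTopologicalGroup G] {S : Set G} (hS : ConjEquicontinuousAtOne S) :
    MulUCOn (@uniformity G (IsTopologicalGroup.rightUniformSpace G)) (S ×ˢ S) := by
  let := IsTopologicalGroup.rightUniformSpace G
  refine mulUCOn_iff.mpr fun D hD => ?_
  obtain ⟨W, hW, hWD⟩ := mem_comap.mp (uniformity_eq_comap_nhds_one' G ▸ hD)
  obtain ⟨W₀, hW₀, hW₀W⟩ := exists_nhds_one_split hW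
  obtain ⟨V, hV, hVW₀⟩ := hS W₀ hW₀
  refine ⟨(fun p : G × G => p.2 * p.1⁻¹) ⁻¹' (V ∩ W₀),
    preimage_mem_comap (inter_mem hV hW₀), ?_⟩
  rintro x₁ x₂ y₁ y₂ ⟨-, hx⟩ ⟨hy, -⟩ - ⟨hx₂, -⟩
  have h_split : x₂ * y₂ * (x₁ * y₁)⁻¹ = x₂ * (y₂ * y₁⁻¹) * x₂⁻¹ * (x₂ * x₁⁻¹) := by group
  apply hWD
  simp only [mem_preimage, h_split]
  exact hW₀W _ (hVW₀ x₂ hx₂ _ hy) _ hx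

end ConjEquicontinuous

theorem stmt_6_general {G H : Type*} [Group G] [TopologicalSpace G]
    [Group H] [TopologicalSpace H] [IsTopologicalGroup H]
    (f : G →* H) (hfc : Continuous f) (hfo : IsOpenMap f)
    (U : Set G) (hUo : IsOpen U) (hU1 : (1 : G) ∈ U) (hUs : U⁻¹ = U)
    (hG : ∃ u : UniformSpace G, u.toTopologicalSpace = ‹TopologicalSpace G› ∧
        MulUCOn (@uniformity G u) ((U ^ 2) ×ˢ (U ^ 2))) :
    (f '' U)⁻¹ = f '' U ∧ IsOpen (f '' U) ∧ (1 : H) ∈ f '' U ∧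
      ∃ v : UniformSpace H, v.toTopologicalSpace = ‹TopologicalSpace H› ∧
        MulUCOn (@uniformity H v) (((f '' U) ^ 2) ×ˢ ((f '' U) ^ 2)) := by
  obtain ⟨u, rfl, hmul⟩ := hG
  have hU : ConjEquicontinuousAtOne U :=
    conjEquicontinuousAtOne_of_mulUCOn (hUo.mem_nhds hU1) hUs hmul
  have hfU : ConjEquicontinuousAtOne (f '' U) := hU.image hfc hfo
  refine ⟨by rw [← image_inv, hUs], hfo U hUo, ⟨1, hU1, map_one f⟩,
    IsTopologicalGroup.rightUniformSpace H, rfl, ?_⟩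
  exact mulUCOn_rightUniformity_of_conjEquicontinuousAtOne (pow_two (f '' U) ▸ hfU.mul hfU)

theorem stmt_6 {G H : Type*} [Group G] [TopologicalSpace G] [IsTopologicalGroup G] [T2Space G]
    [Group H] [TopologicalSpace H] [IsTopologicalGroup H] [T2Space H]
    (f : G →* H) (hfc : Continuous f) (hfo : IsOpenMap f)
    (U : Set G) (hUo : IsOpen U) (hU1 : (1 : G) ∈ U) (hUs : U⁻¹ = U)
    (hG : ∃ u : UniformSpace G, u.toTopologicalSpace = ‹TopologicalSpace G› ∧
        MulUCOn (@uniformity G u) ((U ^ 2) ×ˢ (U ^ 2))) :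
    (f '' U)⁻¹ = f '' U ∧ IsOpen (f '' U) ∧ (1 : H) ∈ f '' U ∧
      ∃ v : UniformSpace H, v.toTopologicalSpace = ‹TopologicalSpace H› ∧
        MulUCOn (@uniformity H v) (((f '' U) ^ 2) ×ˢ ((f '' U) ^ 2)) :=
  stmt_6_general f hfc hfo U hUo hU1 hUs hG
end

section
/- Let G be a Hausdorff locally compact topological group. Then G is NSS if and only if G is uniformly NSS. -/
/-!
A uniformly free neighborhood contains no nontrivial subgroup: if `x ≠ 1` lies in a subgroup
`H ⊆ U`, then taking `V = {x}ᶜ` some power of `x` leaves `U`, although it stays in `H`.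

Conversely, shrink an NSS neighborhood `U` to a compact neighborhood `K ⊆ U ∩ U⁻¹`. If `K` were
not uniformly free, there would be a neighborhood `V` and points `x_n ∉ V` with
`x_n, x_n², …, x_nⁿ ∈ K`. A cluster point `x` of `(x_n)` lies outside the interior of `V` and
has all its positive powers in the closed set `K`, so the cyclic group generated by `x` lies in
`U` and `x = 1`, a contradiction.
-/

open Filter Set Topology Pointwise

/-- The neighborhood `U` of the identity is uniformly free from small subgroups: for every
neighborhood `V` of the identity there is `n` such that every `x ∉ V` has `x ^ k ∉ U` for some
`1 ≤ k ≤ n`. -/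
def UniformlyFreeFSS {G : Type*} [Group G] [TopologicalSpace G] (U : Set G) : Prop :=
  ∀ V ∈ 𝓝 (1 : G), ∃ n : ℕ, ∀ x : G, x ∉ V → ∃ k : ℕ, 1 ≤ k ∧ k ≤ n ∧ x ^ k ∉ U

/-- A topological group is uniformly NSS if some neighborhood of the identity is uniformly free
from small subgroups. -/
def UNSS (G : Type*) [Group G] [TopologicalSpace G] : Prop :=
  ∃ U ∈ 𝓝 (1 : G), UniformlyFreeFSS U

/-- A topological group has no small subgroups if some neighborhood of the identity contains no
subgroup other than the trivial one. -/
def NSS (G : Type*) [Group G] [TopologicalSpace G] : Prop :=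
  ∃ U ∈ 𝓝 (1 : G), ∀ H : Subgroup G, (H : Set G) ⊆ U → H = ⊥

theorem UniformlyFreeFSS.subgroup_eq_bot {G : Type*} [Group G] [TopologicalSpace G] [T1Space G]
    {U : Set G} (hU : UniformlyFreeFSS U) (H : Subgroup G) (hHU : (H : Set G) ⊆ U) : H = ⊥ := by
  refine (Subgroup.eq_bot_iff_forall H).2 fun x hx => ?_
  by_contra hx1
  obtain ⟨n, hn⟩ := hU {x}ᶜ (isOpen_compl_singleton.mem_nhds (Ne.symm hx1))
  obtain ⟨k, -, -, hkU⟩ := hn x (notMem_compl_iff.2 rfl)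
  exact hkU (hHU (H.pow_mem hx k))

theorem UNSS.nss {G : Type*} [Group G] [TopologicalSpace G] [T1Space G] (h : UNSS G) : NSS G :=
  let ⟨U, hU, hfree⟩ := h
  ⟨U, hU, hfree.subgroup_eq_bot⟩

theorem IsCompact.exists_forall_pow_mem {M : Type*} [Monoid M] [TopologicalSpace M]
    [ContinuousMul M] {K F : Set M} (hK : IsCompact K) (hKc : IsClosed K) (hF : IsClosed F)
    (h : ∀ n : ℕ, ∃ x ∈ F, ∀ k : ℕ, 1 ≤ k → k ≤ n → x ^ k ∈ K) :
    ∃ x ∈ F, ∀ k : ℕ, 1 ≤ k → x ^ k ∈ K := by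
  choose u huF huK using h
  have hu_mem : ∃ᶠ n in atTop, u n ∈ K :=
    (eventually_ge_atTop 1).frequently.mono fun n hn => by simpa using huK n 1 le_rfl hn
  obtain ⟨x, -, hx⟩ := hK.exists_mapClusterPt_of_frequently hu_mem
  refine ⟨x, hF.mem_of_mapClusterPt hx (.of_forall huF), fun k hk => ?_⟩
  have hxk : MapClusterPt (x ^ k) atTop fun n => u n ^ k :=
    MapClusterPt.continuousAt_comp (f := (· ^ k)) (continuous_pow k).continuousAt hx
  exact hKc.mem_of_mapClusterPt hxk ((eventually_ge_atTop k).mono fun n => huK n k hk)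

theorem IsCompact.uniformlyFreeFSS {G : Type*} [Group G] [TopologicalSpace G] [ContinuousMul G]
    {K : Set G} (hK : IsCompact K) (hKc : IsClosed K)
    (hfree : ∀ x : G, (∀ k : ℕ, 1 ≤ k → x ^ k ∈ K) → x = 1) : UniformlyFreeFSS K := by
  intro V hV
  by_contra! hcon
  obtain ⟨x, hxV, hxK⟩ := hK.exists_forall_pow_mem hKc isOpen_interior.isClosed_compl
    fun n => (hcon n).imp fun x ⟨hxV, hxK⟩ => ⟨fun hx => hxV (interior_subset hx), hxK⟩
  exact hxV (hfree x hxK ▸ mem_interior_iff_mem_nhds.2 hV)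

theorem Subgroup.coe_zpowers_subset_of_pow_mem {G : Type*} [Group G] {U : Set G} {x : G}
    (h1 : 1 ∈ U) (hpow : ∀ k : ℕ, 1 ≤ k → x ^ k ∈ U ∩ U⁻¹) : (zpowers x : Set G) ⊆ U := by
  rintro _ ⟨m, rfl⟩
  obtain ⟨k, rfl | rfl⟩ := Int.eq_nat_or_neg m
  all_goals
    rcases Nat.eq_zero_or_pos k with rfl | hk
    · simpa using h1
  · simpa using (hpow k hk).1
  · simpa using (hpow k hk).2

theorem NSS.uNSS {G : Type*} [Group G] [TopologicalSpace G] [IsTopologicalGroup G] [T2Space G]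
    [LocallyCompactSpace G] (h : NSS G) : UNSS G := by
  obtain ⟨U, hU, hfree⟩ := h
  obtain ⟨K, hK, hKU, hKc⟩ := local_compact_nhds (inter_mem hU (inv_mem_nhds_one G hU))
  refine ⟨K, hK, hKc.uniformlyFreeFSS hKc.isClosed fun x hx => ?_⟩
  exact Subgroup.zpowers_eq_bot.1 <| hfree _ <|
    Subgroup.coe_zpowers_subset_of_pow_mem (mem_of_mem_nhds hU) fun k hk => hKU (hx k hk)

theorem stmt_7 {G : Type*} [Group G] [TopologicalSpace G] [IsTopologicalGroup G] [T2Space G]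
    [LocallyCompactSpace G] :
    NSS G ↔ UNSS G :=
  ⟨NSS.uNSS, UNSS.nss⟩
end

section
/- Every Hausdorff topological group that is uniformly NSS is metrizable, i.e., its topology is induced by some metric. -/
open Filter Set Topology Pointwise Uniformity

/-!
If `U` is uniformly free from small subgroups, the sets of `x` whose first `n` powers lie in `U`
form a countable basis of neighborhoods of the identity. A Hausdorff topological group that is
first countable at the identity is metrizable (Birkhoff–Kakutani), since its one-sided uniformity
is then countably generated.
-/

def powersMemSet {M : Type*} [Monoid M] (U : Set M) (n : ℕ) : Set M :=
  {x | ∀ k, 1 ≤ k → k ≤ n → x ^ k ∈ U}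

theorem powersMemSet_eq_biInter {M : Type*} [Monoid M] (U : Set M) (n : ℕ) :
    powersMemSet U n = ⋂ k ∈ Finset.Icc 1 n, (· ^ k) ⁻¹' U := by
  ext x
  simp [powersMemSet, Finset.mem_Icc]

theorem powersMemSet_mem_nhds_one {M : Type*} [Monoid M] [TopologicalSpace M] [ContinuousMul M]
    {U : Set M} (hU : U ∈ 𝓝 (1 : M)) (n : ℕ) : powersMemSet U n ∈ 𝓝 (1 : M) := by
  rw [powersMemSet_eq_biInter]
  refine (biInter_finset_mem _).2 fun k _ => ?_
  exact (continuous_pow k).continuousAt.preimage_mem_nhds (by rwa [one_pow])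

theorem UniformlyFreeFSS.hasBasis_nhds_one {G : Type*} [Group G] [TopologicalSpace G]
    [ContinuousMul G] {U : Set G} (hU : U ∈ 𝓝 (1 : G)) (hfree : UniformlyFreeFSS U) :
    (𝓝 (1 : G)).HasBasis (fun _ : ℕ => True) (powersMemSet U) := by
  refine ⟨fun V => ⟨fun hV => ?_, fun ⟨n, _, hnV⟩ => mem_of_superset
    (powersMemSet_mem_nhds_one hU n) hnV⟩⟩
  obtain ⟨n, hn⟩ := hfree V hV
  refine ⟨n, trivial, fun x hx => by_contra fun hxV => ?_⟩
  obtain ⟨k, hk1, hkn, hkU⟩ := hn x hxV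
  exact hkU (hx k hk1 hkn)

theorem UNSS.isCountablyGenerated_nhds_one {G : Type*} [Group G] [TopologicalSpace G]
    [ContinuousMul G] (h : UNSS G) : (𝓝 (1 : G)).IsCountablyGenerated :=
  let ⟨_, hU, hfree⟩ := h
  (hfree.hasBasis_nhds_one hU).isCountablyGenerated

theorem IsTopologicalGroup.metrizableSpace_of_isCountablyGenerated_nhds_one {G : Type*} [Group G]
    [TopologicalSpace G] [IsTopologicalGroup G] [T0Space G] [(𝓝 (1 : G)).IsCountablyGenerated] :
    TopologicalSpace.MetrizableSpace G := by
  let : UniformSpace G := IsTopologicalGroup.rightUniformSpace G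
  have : (𝓤 G).IsCountablyGenerated := by
    rw [uniformity_eq_comap_nhds_one']
    exact comap.isCountablyGenerated _ _
  exact UniformSpace.metrizableSpace

theorem stmt_9 {G : Type*} [Group G] [TopologicalSpace G] [IsTopologicalGroup G] [T2Space G]
    (h : UNSS G) : TopologicalSpace.MetrizableSpace G := by
  have := h.isCountablyGenerated_nhds_one
  exact IsTopologicalGroup.metrizableSpace_of_isCountablyGenerated_nhds_one
end

section
/- If G is a Hausdorff topological group that is uniformly NSS, then G is locally uniform: there exist a symmetric open neighborhood U of the identity and a uniformity 𝓤 on G inducing the topology of G such that the multiplication map (x,y) ↦ x·y : U²×U² → G is uniformly continuous with respect to 𝓤. -/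
open Filter Set Topology Pointwise

/- Shrink a neighborhood `U₀` that is uniformly free from small subgroups to a symmetric open
`U` with `U ^ 5 ⊆ U₀`, and take the right uniformity, whose entourages are
`{(x, y) | y * x⁻¹ ∈ V}`. The identity
`y₁ y₂ (x₁ x₂)⁻¹ = y₁ (y₂ x₂⁻¹) y₁⁻¹ · y₁ x₁⁻¹`
reduces uniform continuity of multiplication on `U² × U²` to the equicontinuity at `1` of the
conjugations by elements `g ∈ U²`. That is where UNSS enters: if `g x g⁻¹ ∉ V`, some power
`(g x g⁻¹) ^ k = g x ^ k g⁻¹` with `k ≤ n(V)` leaves `U₀`, which is impossible once `x` is so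
small that `x, …, x ^ n` all lie in `U`, because `g U g⁻¹ ⊆ U ^ 5 ⊆ U₀`. -/

theorem exists_mem_nhds_one_pow_subset {M : Type*} [Monoid M] [TopologicalSpace M]
    [ContinuousMul M] (n : ℕ) {S : Set M} (hS : S ∈ 𝓝 (1 : M)) :
    ∃ W ∈ 𝓝 (1 : M), W ^ n ⊆ S := by
  induction n generalizing S with
  | zero => exact ⟨S, hS, by simpa using mem_of_mem_nhds hS⟩
  | succ n ih =>
    obtain ⟨T, hT, hTT⟩ := exists_nhds_one_split hS
    obtain ⟨W, hW, hWT⟩ := ih hT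
    refine ⟨W ∩ T, inter_mem hW hT, ?_⟩
    rw [pow_succ]
    exact mul_subset_iff.2 fun a ha b hb =>
      hTT a (hWT (pow_subset_pow_left inter_subset_left ha)) b hb.2

section

variable {G : Type*} [Group G]

theorem conj_mem_pow_five {U : Set G} (hU : U⁻¹ = U) {g x : G} (hg : g ∈ U ^ 2)
    (hx : x ∈ U) : g * x * g⁻¹ ∈ U ^ 5 := by
  have hg' : g⁻¹ ∈ U ^ 2 := by rwa [← hU, inv_pow, Set.inv_mem_inv]
  have : U ^ 2 * U * U ^ 2 = U ^ 5 := by rw [← pow_succ, ← pow_add]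
  exact this ▸ mul_mem_mul (mul_mem_mul hg hx) hg'

variable [TopologicalSpace G] [IsTopologicalGroup G]

theorem exists_isOpen_inv_eq_pow_subset (n : ℕ) {S : Set G} (hS : S ∈ 𝓝 (1 : G)) :
    ∃ U : Set G, IsOpen U ∧ (1 : G) ∈ U ∧ U⁻¹ = U ∧ U ^ n ⊆ S := by
  obtain ⟨W, hW, hWS⟩ := exists_mem_nhds_one_pow_subset n hS
  obtain ⟨V, hVW, hVo, hV1⟩ := mem_nhds_iff.1 hW
  refine ⟨V ∩ V⁻¹, hVo.inter hVo.inv, ⟨hV1, by simpa using hV1⟩, ?_, ?_⟩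
  · rw [inter_inv, inv_inv, inter_comm]
  · exact (pow_subset_pow_left (inter_subset_left.trans hVW)).trans hWS

theorem UniformlyFreeFSS.tendsto_conj {U₀ U K : Set G} (hU₀ : UniformlyFreeFSS U₀)
    (hU : U ∈ 𝓝 (1 : G)) (hKU : ∀ g ∈ K, ∀ x ∈ U, g * x * g⁻¹ ∈ U₀) :
    Tendsto (fun p : G × G => p.1 * p.2 * p.1⁻¹) (𝓟 K ×ˢ 𝓝 1) (𝓝 1) := by
  intro V hV
  obtain ⟨n, hn⟩ := hU₀ V hV
  obtain ⟨W, hW, hWU⟩ := exists_mem_nhds_one_pow_subset n hU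
  refine mem_prod_iff.2 ⟨K, mem_principal_self K, W, hW, ?_⟩
  rintro ⟨g, x⟩ ⟨hg, hx⟩
  by_contra hgx
  obtain ⟨k, -, hkn, hk⟩ := hn _ hgx
  apply hk
  rw [conj_pow]
  exact hKU g hg _ (hWU (pow_subset_pow_right (mem_of_mem_nhds hW) hkn (pow_mem_pow hx)))

theorem mulUCOn_rightUniformSpace_prod {K : Set G}
    (hK : Tendsto (fun p : G × G => p.1 * p.2 * p.1⁻¹) (𝓟 K ×ˢ 𝓝 1) (𝓝 1)) (L : Set G) :
    MulUCOn (@uniformity G (IsTopologicalGroup.rightUniformSpace G)) (K ×ˢ L) := by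
  let := IsTopologicalGroup.rightUniformSpace G
  rw [MulUCOn, prodUF, uniformity_eq_comap_nhds_one' G, tendsto_comap_iff]
  set 𝓛 := comap (fun q : (G × G) × (G × G) => (q.1.1, q.2.1))
      (comap (fun p : G × G => p.2 * p.1⁻¹) (𝓝 1)) ⊓
    comap (fun q : (G × G) × (G × G) => (q.1.2, q.2.2))
      (comap (fun p : G × G => p.2 * p.1⁻¹) (𝓝 1)) ⊓ 𝓟 ((K ×ˢ L) ×ˢ (K ×ˢ L))
  have hfst : Tendsto ((fun p : G × G => p.2 * p.1⁻¹) ∘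
      fun q : (G × G) × (G × G) => (q.1.1, q.2.1)) 𝓛 (𝓝 1) :=
    (tendsto_comap.comp tendsto_comap).mono_left (inf_le_left.trans inf_le_left)
  have hsnd : Tendsto ((fun p : G × G => p.2 * p.1⁻¹) ∘
      fun q : (G × G) × (G × G) => (q.1.2, q.2.2)) 𝓛 (𝓝 1) :=
    (tendsto_comap.comp tendsto_comap).mono_left (inf_le_left.trans inf_le_right)
  have hmem : Tendsto (fun q : (G × G) × (G × G) => q.2.1) 𝓛 (𝓟 K) :=
    tendsto_principal.2 (mem_inf_of_right (mem_principal.2 fun q hq => hq.2.1))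
  have hconj := hK.comp (hmem.prodMk hsnd)
  simpa only [Function.comp_def, mul_one, mul_inv_rev, mul_assoc, inv_mul_cancel_left]
    using hconj.mul hfst

end

theorem stmt_10_general {G : Type*} [Group G] [TopologicalSpace G] [IsTopologicalGroup G]
    (h : UNSS G) :
    ∃ U : Set G, IsOpen U ∧ (1 : G) ∈ U ∧ U⁻¹ = U ∧
      ∃ u : UniformSpace G, u.toTopologicalSpace = ‹TopologicalSpace G› ∧
        MulUCOn (@uniformity G u) ((U ^ 2) ×ˢ (U ^ 2)) := by
  obtain ⟨U₀, hU₀, hfree⟩ := h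
  obtain ⟨U, hUo, hU1, hUinv, hU5⟩ := exists_isOpen_inv_eq_pow_subset 5 hU₀
  have hconj := hfree.tendsto_conj (K := U ^ 2) (hUo.mem_nhds hU1)
    fun g hg x hx => hU5 (conj_mem_pow_five hUinv hg hx)
  exact ⟨U, hUo, hU1, hUinv, IsTopologicalGroup.rightUniformSpace G, rfl,
    mulUCOn_rightUniformSpace_prod hconj _⟩

theorem stmt_10 {G : Type*} [Group G] [TopologicalSpace G] [IsTopologicalGroup G] [T2Space G]
    (h : UNSS G) :
    ∃ U : Set G, IsOpen U ∧ (1 : G) ∈ U ∧ U⁻¹ = U ∧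
      ∃ u : UniformSpace G, u.toTopologicalSpace = ‹TopologicalSpace G› ∧
        MulUCOn (@uniformity G u) ((U ^ 2) ×ˢ (U ^ 2)) :=
  stmt_10_general h
end

section
/- Let E be a Hausdorff locally convex topological vector space over ℝ, let G be a Hausdorff topological group, and let exp : E → G be a continuous map such that exp(k • a) = (exp a)^k for all a ∈ E and all k ∈ ℤ, and such that exp restricts to a homeomorphism from some open neighborhood of 0 in E onto an open neighborhood of the identity in G. Then G is uniformly NSS if and only if E is normable, i.e., there exists a norm on E whose induced metric topology equals the topology of E. -/
/-!
`exp` is a homeomorphism near `0` carrying multiples `k • a` to powers, so it transports a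
uniformly-free neighborhood of `1` in `G` to one of `0` in `E` and back; on the way back the
neighborhood `W` is chosen with `W + W` inside the injectivity domain, so that the multiples of
`a` cannot leave `W` while their exponentials stay in `exp '' W`. Hence `G` is uniformly NSS iff
the additive group `E` is. In a locally convex space, a balanced uniformly-free neighborhood `U`
of `0` is bounded: `t • u` for small `t` cannot leave a given neighborhood without some multiple
`(k * t) • u`, `k ≤ n`, leaving `U`. By Kolmogorov's criterion the gauge of a bounded convex
neighborhood of `0` is a norm inducing the topology. Conversely the unit ball of such a norm is
uniformly free, since `x ∉ {N < δ}` forces `N (⌈δ⁻¹⌉ • x) ≥ 1`.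
-/

open Filter Set Topology Pointwise

open Bornology

def AddUniformlyFreeFSS {E : Type*} [AddGroup E] [TopologicalSpace E] (U : Set E) : Prop :=
  ∀ V ∈ 𝓝 (0 : E), ∃ n : ℕ, ∀ x : E, x ∉ V → ∃ k : ℕ, 1 ≤ k ∧ k ≤ n ∧ k • x ∉ U

def AddUNSS (E : Type*) [AddGroup E] [TopologicalSpace E] : Prop :=
  ∃ U ∈ 𝓝 (0 : E), AddUniformlyFreeFSS U

theorem AddUniformlyFreeFSS.mono {E : Type*} [AddGroup E] [TopologicalSpace E] {U U' : Set E}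
    (hU' : AddUniformlyFreeFSS U') (hUU' : U ⊆ U') : AddUniformlyFreeFSS U := fun V hV ↦ by
  obtain ⟨n, hn⟩ := hU' V hV
  exact ⟨n, fun x hx ↦ (hn x hx).imp fun _ ⟨h1, hn, hx⟩ ↦ ⟨h1, hn, fun h ↦ hx (hUU' h)⟩⟩

section Transfer

variable {E G : Type*} [AddGroup E] [Group G] {exp : E → G} {V W : Set E}

/-- `(k + 1) • a = k • a + a` lies in `W + W ⊆ V`, where `exp` is injective. -/
theorem nsmul_mem_of_pow_mem_image (hpow : ∀ (a : E) (k : ℕ), exp (k • a) = exp a ^ k)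
    (hinj : InjOn exp V) (hW : ∀ b ∈ W, ∀ c ∈ W, b + c ∈ V) (hW0 : (0 : E) ∈ W) {a : E}
    (ha : a ∈ W) {n : ℕ} (hpowW : ∀ k, 1 ≤ k → k ≤ n → exp a ^ k ∈ exp '' W) :
    ∀ k ≤ n, k • a ∈ W := by
  intro k hk
  induction k with
  | zero => rwa [zero_nsmul]
  | succ k ih =>
    obtain ⟨b, hbW, hb⟩ := hpowW (k + 1) (Nat.le_add_left 1 k) hk
    have hkaV : (k + 1) • a ∈ V := succ_nsmul a k ▸ hW _ (ih (Nat.le_of_succ_le hk)) a ha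
    have hbV : b ∈ V := add_zero b ▸ hW b hbW 0 hW0
    exact hinj hbV hkaV (hb.trans (hpow a (k + 1)).symm) ▸ hbW

variable [TopologicalSpace E] [TopologicalSpace G]

theorem UNSS.addUNSS (hexp : map exp (𝓝 0) = 𝓝 1)
    (hpow : ∀ (a : E) (k : ℕ), exp (k • a) = exp a ^ k) (hV : V ∈ 𝓝 0) (hinj : InjOn exp V)
    (hG : UNSS G) : AddUNSS E := by
  obtain ⟨U, hU, hUfree⟩ := hG
  refine ⟨V ∩ exp ⁻¹' U, inter_mem hV (hexp.le hU), fun O hO ↦ ?_⟩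
  obtain ⟨n, hn⟩ := hUfree (exp '' (O ∩ V)) (hexp ▸ image_mem_map (inter_mem hO hV))
  refine ⟨max n 1, fun a ha ↦ ?_⟩
  by_cases haV : a ∈ V
  · have hexpa : exp a ∉ exp '' (O ∩ V) := by
      rintro ⟨b, ⟨hbO, hbV⟩, hba⟩
      exact ha (hinj hbV haV hba ▸ hbO)
    obtain ⟨k, hk1, hkn, hkU⟩ := hn _ hexpa
    exact ⟨k, hk1, hkn.trans (le_max_left _ _), fun hk ↦ hkU (hpow a k ▸ hk.2)⟩
  · exact ⟨1, le_rfl, le_max_right _ _, fun h ↦ haV (one_nsmul a ▸ h.1)⟩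

theorem AddUNSS.unss [ContinuousAdd E] (hexp : map exp (𝓝 0) = 𝓝 1)
    (hpow : ∀ (a : E) (k : ℕ), exp (k • a) = exp a ^ k) (hV : V ∈ 𝓝 0) (hinj : InjOn exp V)
    (hE : AddUNSS E) : UNSS G := by
  obtain ⟨W₀, hW₀, hW₀free⟩ := hE
  obtain ⟨W₁, hW₁, hW₁V⟩ := exists_nhds_zero_half hV
  have hW : W₀ ∩ W₁ ∈ 𝓝 0 := inter_mem hW₀ hW₁
  refine ⟨exp '' (W₀ ∩ W₁), hexp ▸ image_mem_map hW, fun O hO ↦ ?_⟩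
  obtain ⟨n, hn⟩ := hW₀free.mono inter_subset_left _ (hexp.le hO)
  refine ⟨max n 1, fun x hx ↦ ?_⟩
  by_contra! hpowW
  obtain ⟨a, haW, rfl⟩ := pow_one x ▸ hpowW 1 le_rfl (le_max_right _ _)
  obtain ⟨k, hk1, hkn, hkW⟩ := hn a hx
  exact hkW (nsmul_mem_of_pow_mem_image hpow hinj (fun b hb c hc ↦ hW₁V b hb.2 c hc.2)
    (mem_of_mem_nhds hW) haW (fun j hj1 hjn ↦ hpowW j hj1 (hjn.trans (le_max_left _ _))) k hkn)

theorem unss_iff_addUNSS [ContinuousAdd E] (hexp : map exp (𝓝 0) = 𝓝 1)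
    (hpow : ∀ (a : E) (k : ℕ), exp (k • a) = exp a ^ k) (hV : V ∈ 𝓝 0) (hinj : InjOn exp V) :
    UNSS G ↔ AddUNSS E :=
  ⟨UNSS.addUNSS hexp hpow hV hinj, AddUNSS.unss hexp hpow hV hinj⟩

end Transfer

theorem isOpen_iff_of_comap_nhds_zero {E : Type*} [AddGroup E] [TopologicalSpace E]
    [IsTopologicalAddGroup E] {N : E → ℝ} (hN : comap N (𝓝 0) = 𝓝 0) (hN_nonneg : ∀ x, 0 ≤ N x)
    (s : Set E) : IsOpen s ↔ ∀ x ∈ s, ∃ ε > (0 : ℝ), {y : E | N (y - x) < ε} ⊆ s := by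
  have hbasis (x : E) :
      (𝓝 x).HasBasis (fun ε : ℝ ↦ 0 < ε) fun ε ↦ {y | N (y - x) < ε} := by
    rw [← nhds_translation_add_neg x, ← hN, comap_comap]
    simpa [Function.comp_def, ← sub_eq_add_neg, abs_of_nonneg (hN_nonneg _)] using
      (nhds_basis_zero_abs_lt ℝ).comap (N ∘ (· + -x))
  simp only [isOpen_iff_mem_nhds, (hbasis _).mem_iff]

section Normability

variable {E : Type*} [AddCommGroup E] [Module ℝ E] [TopologicalSpace E]

def IsCompatibleNorm (N : E → ℝ) : Prop :=
  (∀ x, N x = 0 ↔ x = 0) ∧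
  (∀ x y, N (x + y) ≤ N x + N y) ∧
  (∀ (c : ℝ) (x : E), N (c • x) = |c| * N x) ∧
  (∀ s : Set E, IsOpen s ↔ ∀ x ∈ s, ∃ ε > (0 : ℝ), {y : E | N (y - x) < ε} ⊆ s)

theorem isCompatibleNorm_gauge [IsTopologicalAddGroup E] [ContinuousSMul ℝ E] [T1Space E]
    {U : Set E} (hU : U ∈ 𝓝 0) (hconv : Convex ℝ U) (hbal : Balanced ℝ U)
    (hb : IsVonNBounded ℝ U) : IsCompatibleNorm (gauge U) :=
  have habs : Absorbent ℝ U := absorbent_nhds_zero hU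
  ⟨fun _ ↦ gauge_eq_zero habs hb, gauge_add_le hconv habs,
    fun c x ↦ by rw [gauge_smul hbal, Real.norm_eq_abs],
    isOpen_iff_of_comap_nhds_zero (comap_gauge_nhds_zero hb hU) gauge_nonneg⟩

theorem AddUniformlyFreeFSS.isVonNBounded {U : Set E} (hU : AddUniformlyFreeFSS U)
    (hbal : Balanced ℝ U) : IsVonNBounded ℝ U := by
  rw [isVonNBounded_iff_tendsto_smallSets_nhds, tendsto_smallSets_iff]
  intro W hW
  obtain ⟨n, hn⟩ := hU W hW
  have hn1 : (0 : ℝ) < n + 1 := n.cast_add_one_pos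
  filter_upwards [Metric.ball_mem_nhds (0 : ℝ) (inv_pos.2 hn1)] with t ht
  rintro _ ⟨u, hu, rfl⟩
  by_contra htu
  obtain ⟨k, -, hkn, hk⟩ := hn _ htu
  rw [← Nat.cast_smul_eq_nsmul ℝ, smul_smul] at hk
  refine hk (hbal.smul_mem ?_ hu)
  rw [mem_ball_zero_iff] at ht
  have hkn' : (k : ℝ) ≤ n + 1 := by exact_mod_cast hkn.trans n.le_succ
  calc ‖(k : ℝ) * t‖ = k * ‖t‖ := by rw [norm_mul, Real.norm_natCast]
    _ ≤ (n + 1) * ‖t‖ := by gcongr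
    _ ≤ (n + 1) * (n + 1 : ℝ)⁻¹ := by gcongr
    _ = 1 := mul_inv_cancel₀ hn1.ne'

theorem IsCompatibleNorm.addUNSS {N : E → ℝ} (hN : IsCompatibleNorm N) : AddUNSS E := by
  obtain ⟨hN0, hNadd, hNsmul, hNopen⟩ := hN
  have hball : IsOpen {y | N y < 1} := by
    refine (hNopen _).2 fun y hy ↦ ⟨1 - N y, sub_pos.2 hy, fun z hz ↦ ?_⟩
    have := hNadd (z - y) y
    rw [sub_add_cancel] at this
    simp only [mem_ofPred_eq] at hy hz ⊢
    linarith
  have hsmall : ∀ V ∈ 𝓝 (0 : E), ∃ δ > (0 : ℝ), {y | N y < δ} ⊆ V := fun V hV ↦ by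
    obtain ⟨O, hOV, hOo, hO0⟩ := mem_nhds_iff.1 hV
    obtain ⟨δ, hδ, hδO⟩ := (hNopen O).1 hOo 0 hO0
    exact ⟨δ, hδ, by simpa using hδO.trans hOV⟩
  refine ⟨{y | N y < 1}, hball.mem_nhds (by simp [(hN0 0).2 rfl]), fun V hV ↦ ?_⟩
  obtain ⟨δ, hδ, hδV⟩ := hsmall V hV
  refine ⟨⌈δ⁻¹⌉₊, fun x hx ↦ ⟨⌈δ⁻¹⌉₊, Nat.one_le_ceil_iff.2 (inv_pos.2 hδ), le_rfl, ?_⟩⟩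
  have hδx : δ ≤ N x := not_lt.1 fun h ↦ hx (hδV h)
  rw [mem_ofPred_eq, not_lt, ← Nat.cast_smul_eq_nsmul ℝ, hNsmul, Nat.abs_cast]
  calc (1 : ℝ) = δ⁻¹ * δ := (inv_mul_cancel₀ hδ.ne').symm
    _ ≤ ⌈δ⁻¹⌉₊ * N x := mul_le_mul (Nat.le_ceil _) hδx hδ.le (Nat.cast_nonneg _)

theorem addUNSS_iff_exists_isCompatibleNorm [IsTopologicalAddGroup E] [ContinuousSMul ℝ E]
    [LocallyConvexSpace ℝ E] [T1Space E] : AddUNSS E ↔ ∃ N : E → ℝ, IsCompatibleNorm N := by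
  refine ⟨fun ⟨U₀, hU₀, hfree⟩ ↦ ?_, fun ⟨N, hN⟩ ↦ hN.addUNSS⟩
  obtain ⟨U, ⟨hU0, hUo, hUbal, hUconv⟩, hUU₀⟩ := (nhds_hasBasis_absConvex_open ℝ E).mem_iff.1 hU₀
  exact ⟨gauge U, isCompatibleNorm_gauge (hUo.mem_nhds hU0) hUconv hUbal
    ((hfree.mono hUU₀).isVonNBounded hUbal)⟩

end Normability

theorem stmt_13_general {E G : Type*}
    [AddCommGroup E] [Module ℝ E] [TopologicalSpace E] [IsTopologicalAddGroup E]
    [ContinuousSMul ℝ E] [LocallyConvexSpace ℝ E] [T2Space E]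
    [Group G] [TopologicalSpace G]
    (exp : E → G) (hexpc : Continuous exp)
    (hexppow : ∀ (a : E) (k : ℤ), exp (k • a) = exp a ^ k)
    (V : Set E) (hVo : IsOpen V) (hV0 : (0 : E) ∈ V)
    (hVimage : IsOpen (exp '' V))
    (ψ : G → E) (hψ : ∀ x ∈ V, ψ (exp x) = x) (hψc : ContinuousOn ψ (exp '' V)) :
    UNSS G ↔
      ∃ N : E → ℝ,
        (∀ x, N x = 0 ↔ x = 0) ∧
        (∀ x y, N (x + y) ≤ N x + N y) ∧
        (∀ (c : ℝ) (x : E), N (c • x) = |c| * N x) ∧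
        (∀ s : Set E, IsOpen s ↔ ∀ x ∈ s, ∃ ε > (0 : ℝ), {y : E | N (y - x) < ε} ⊆ s) := by
  have hpow : ∀ (a : E) (k : ℕ), exp (k • a) = exp a ^ k := fun a k ↦ by
    simpa using hexppow a k
  have hexp0 : exp 0 = 1 := by simpa using hpow 0 0
  let e : OpenPartialHomeomorph E G :=
    { toFun := exp, invFun := ψ, source := V, target := exp '' V
      map_source' := fun x hx ↦ mem_image_of_mem exp hx
      map_target' := by rintro _ ⟨x, hx, rfl⟩; rwa [hψ x hx]
      left_inv' := hψ
      right_inv' := by rintro _ ⟨x, hx, rfl⟩; rw [hψ x hx]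
      open_source := hVo, open_target := hVimage
      continuousOn_toFun := hexpc.continuousOn, continuousOn_invFun := hψc }
  have hmap : map exp (𝓝 0) = 𝓝 1 := hexp0 ▸ e.map_nhds_eq hV0
  exact (unss_iff_addUNSS hmap hpow (hVo.mem_nhds hV0) e.injOn).trans
    addUNSS_iff_exists_isCompatibleNorm

theorem stmt_13 {E G : Type*}
    [AddCommGroup E] [Module ℝ E] [TopologicalSpace E] [IsTopologicalAddGroup E]
    [ContinuousSMul ℝ E] [LocallyConvexSpace ℝ E] [T2Space E]
    [Group G] [TopologicalSpace G] [IsTopologicalGroup G] [T2Space G]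
    (exp : E → G) (hexpc : Continuous exp)
    (hexppow : ∀ (a : E) (k : ℤ), exp (k • a) = exp a ^ k)
    (V : Set E) (hVo : IsOpen V) (hV0 : (0 : E) ∈ V)
    (hVimage : IsOpen (exp '' V)) (hinj : Set.InjOn exp V)
    (ψ : G → E) (hψ : ∀ x ∈ V, ψ (exp x) = x) (hψc : ContinuousOn ψ (exp '' V)) :
    UNSS G ↔
      ∃ N : E → ℝ,
        (∀ x, N x = 0 ↔ x = 0) ∧
        (∀ x y, N (x + y) ≤ N x + N y) ∧
        (∀ (c : ℝ) (x : E), N (c • x) = |c| * N x) ∧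
        (∀ s : Set E, IsOpen s ↔ ∀ x ∈ s, ∃ ε > (0 : ℝ), {y : E | N (y - x) < ε} ⊆ s) :=
  stmt_13_general exp hexpc hexppow V hVo hV0 hVimage ψ hψ hψc
end

section
/- Let E be a real Banach space, r > 0, W := {x ∈ E : ‖x‖ < r}, and ε ∈ (0,1). Let η : E → E → E be a map such that for every c ∈ W: η c 0 = c, the map v ↦ η c v is Fréchet differentiable at every point of W, and ‖D(η c)(v) w − w‖ ≤ ε·‖w‖ for all v ∈ W and all w ∈ E. Fix u ∈ W and define the sequence x₀ := u and x_{m+1} := η x_m u. Then for every m ≥ 0, if x_i ∈ W for all 0 ≤ i < m, then ‖x_m‖ ≥ m·(1 − ε)·‖u‖. -/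
open Filter Set Topology

/-! If every derivative of `v ↦ η c v` is `ε`-close to the identity, the mean value inequality on
the ball shows that one multiplication step `c ↦ η c u` moves `c` by `u` up to an error of at most
`ε ‖u‖`. Summing these errors, `x m` stays within `m ε ‖u‖` of `(m + 1) • u`, whose norm is
`(m + 1) ‖u‖`. -/

theorem Convex.norm_image_sub_sub_le_of_norm_fderiv_apply_sub_le {E : Type*}
    [NormedAddCommGroup E] [NormedSpace ℝ E] {f : E → E} {s : Set E} {ε : ℝ} (hs : Convex ℝ s)
    (hf : ∀ v ∈ s, DifferentiableAt ℝ f v)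
    (hf' : ∀ v ∈ s, ∀ w, ‖fderiv ℝ f v w - w‖ ≤ ε * ‖w‖) {x y : E} (hx : x ∈ s) (hy : y ∈ s) :
    ‖f y - f x - (y - x)‖ ≤ ε * ‖y - x‖ := by
  rcases eq_or_ne y x with rfl | hyx
  · simp
  have hε : 0 ≤ ε := nonneg_of_mul_nonneg_left ((norm_nonneg _).trans (hf' x hx (y - x)))
    (norm_pos_iff.2 (sub_ne_zero.2 hyx))
  exact hs.norm_image_sub_le_of_norm_fderiv_le' (φ := ContinuousLinearMap.id ℝ E) hf
    (fun v hv => ContinuousLinearMap.opNorm_le_bound _ hε (hf' v hv)) hx hy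

theorem norm_sub_succ_nsmul_le_of_norm_succ_sub_sub_le {E : Type*} [SeminormedAddCommGroup E]
    {x : ℕ → E} {u : E} {δ : ℝ} (hx0 : x 0 = u) :
    ∀ {n : ℕ}, (∀ i < n, ‖x (i + 1) - x i - u‖ ≤ δ) → ‖x n - (n + 1) • u‖ ≤ n * δ
  | 0, _ => by simp [hx0]
  | n + 1, hstep => by
    have ih := norm_sub_succ_nsmul_le_of_norm_succ_sub_sub_le hx0
      fun i hi => hstep i (hi.trans n.lt_succ_self)
    calc ‖x (n + 1) - (n + 1 + 1) • u‖ = ‖(x (n + 1) - x n - u) + (x n - (n + 1) • u)‖ := by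
          rw [add_nsmul, one_nsmul]; abel_nf
      _ ≤ δ + n * δ := norm_add_le_of_le (hstep n n.lt_succ_self) ih
      _ = (n + 1 : ℕ) * δ := by push_cast; ring

theorem le_norm_of_norm_succ_sub_sub_le {E : Type*} [NormedAddCommGroup E] [NormedSpace ℝ E]
    {x : ℕ → E} {u : E} {δ : ℝ} {n : ℕ} (hx0 : x 0 = u)
    (hstep : ∀ i < n, ‖x (i + 1) - x i - u‖ ≤ δ) : (n + 1) * ‖u‖ - n * δ ≤ ‖x n‖ := by
  have hnorm : ‖(n + 1) • u‖ = (n + 1) * ‖u‖ := by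
    rw [RCLike.norm_nsmul ℝ, nsmul_eq_mul]; push_cast; ring
  have htriangle := norm_sub_norm_le ((n + 1) • u) (x n)
  rw [norm_sub_rev, hnorm] at htriangle
  linarith [norm_sub_succ_nsmul_le_of_norm_succ_sub_sub_le hx0 hstep]

theorem stmt_14_general {E : Type*} [NormedAddCommGroup E] [NormedSpace ℝ E]
    (r : ℝ) (W : Set E) (hW : W = Metric.ball (0 : E) r)
    (ε : ℝ)
    (η : E → E → E)
    (hη0 : ∀ c ∈ W, η c 0 = c)
    (hdiff : ∀ c ∈ W, ∀ v ∈ W, DifferentiableAt ℝ (η c) v)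
    (hderiv : ∀ c ∈ W, ∀ v ∈ W, ∀ w : E, ‖fderiv ℝ (η c) v w - w‖ ≤ ε * ‖w‖)
    (u : E) (hu : u ∈ W)
    (x : ℕ → E) (hx0 : x 0 = u) (hxs : ∀ m : ℕ, x (m + 1) = η (x m) u) :
    ∀ m : ℕ, (∀ i < m, x i ∈ W) → (m : ℝ) * (1 - ε) * ‖u‖ ≤ ‖x m‖ := by
  subst hW
  have h0 : (0 : E) ∈ Metric.ball 0 r :=
    Metric.mem_ball_self ((norm_nonneg u).trans_lt (mem_ball_zero_iff.1 hu))
  intro m hm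
  have hstep : ∀ i < m, ‖x (i + 1) - x i - u‖ ≤ ε * ‖u‖ := fun i hi => by
    simpa [hxs, hη0 _ (hm i hi), sub_right_comm _ u] using
      (convex_ball 0 r).norm_image_sub_sub_le_of_norm_fderiv_apply_sub_le
        (hdiff _ (hm i hi)) (hderiv _ (hm i hi)) h0 hu
  nlinarith [le_norm_of_norm_succ_sub_sub_le hx0 hstep, norm_nonneg u]

theorem stmt_14 {E : Type*} [NormedAddCommGroup E] [NormedSpace ℝ E] [CompleteSpace E]
    (r : ℝ) (hr : 0 < r) (W : Set E) (hW : W = Metric.ball (0 : E) r)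
    (ε : ℝ) (hε : ε ∈ Set.Ioo (0 : ℝ) 1)
    (η : E → E → E)
    (hη0 : ∀ c ∈ W, η c 0 = c)
    (hdiff : ∀ c ∈ W, ∀ v ∈ W, DifferentiableAt ℝ (η c) v)
    (hderiv : ∀ c ∈ W, ∀ v ∈ W, ∀ w : E, ‖fderiv ℝ (η c) v w - w‖ ≤ ε * ‖w‖)
    (u : E) (hu : u ∈ W)
    (x : ℕ → E) (hx0 : x 0 = u) (hxs : ∀ m : ℕ, x (m + 1) = η (x m) u) :
    ∀ m : ℕ, (∀ i < m, x i ∈ W) → (m : ℝ) * (1 - ε) * ‖u‖ ≤ ‖x m‖ :=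
  stmt_14_general r W hW ε η hη0 hdiff hderiv u hu x hx0 hxs
end

section
/- Let E be a real Banach space, r > 0, M ≥ 0, and V := {x ∈ E : ‖x‖ < r}. Let m : E × E → E be a map satisfying ‖m(a,b) − a − b‖ ≤ M·‖a‖·‖b‖ for all a, b ∈ V. Suppose x, y ∈ V are such that z := m(x, −y) lies in V and m(z, y) = x. Then ‖x − y‖ ≤ (1 + M·r)·‖z‖. -/
theorem norm_sub_le_one_add_mul_of_norm_sub_sub_le {E : Type*} [SeminormedAddCommGroup E]
    {x y z : E} {c : ℝ} (h : ‖x - y - z‖ ≤ c * ‖z‖) : ‖x - y‖ ≤ (1 + c) * ‖z‖ := by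
  have := norm_sub_norm_le (x - y) z
  linarith

theorem stmt_16_general {E : Type*} [NormedAddCommGroup E]
    (r : ℝ) (M : ℝ) (hM : 0 ≤ M) (V : Set E) (hV : V = Metric.ball (0 : E) r)
    (m : E × E → E)
    (hm : ∀ a ∈ V, ∀ b ∈ V, ‖m (a, b) - a - b‖ ≤ M * ‖a‖ * ‖b‖)
    (x y : E) (hy : y ∈ V)
    (z : E) (hzV : z ∈ V) (hassoc : m (z, y) = x) :
    ‖x - y‖ ≤ (1 + M * r) * ‖z‖ := by
  have hyr : ‖y‖ ≤ r := by
    rw [hV, mem_ball_zero_iff] at hy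
    exact hy.le
  refine norm_sub_le_one_add_mul_of_norm_sub_sub_le ?_
  calc ‖x - y - z‖ = ‖m (z, y) - z - y‖ := by rw [hassoc, sub_right_comm]
    _ ≤ M * ‖z‖ * ‖y‖ := hm z hzV y hy
    _ ≤ M * ‖z‖ * r := by gcongr
    _ = M * r * ‖z‖ := by ring

theorem stmt_16 {E : Type*} [NormedAddCommGroup E] [NormedSpace ℝ E] [CompleteSpace E]
    (r : ℝ) (hr : 0 < r) (M : ℝ) (hM : 0 ≤ M) (V : Set E) (hV : V = Metric.ball (0 : E) r)
    (m : E × E → E)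
    (hm : ∀ a ∈ V, ∀ b ∈ V, ‖m (a, b) - a - b‖ ≤ M * ‖a‖ * ‖b‖)
    (x y : E) (hx : x ∈ V) (hy : y ∈ V)
    (z : E) (hz : z = m (x, -y)) (hzV : z ∈ V) (hassoc : m (z, y) = x) :
    ‖x - y‖ ≤ (1 + M * r) * ‖z‖ :=
  stmt_16_general r M hM V hV m hm x y hy z hzV hassoc
end
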